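/- arXiv:1610.09834 — 2 statements merged into one kernel-verified Lean document; each statement's English description precedes it below -/
import Mathlib

section
/- The identity element of F does not belong to the subsemigroup of F generated by {u, v, w} (i.e., no product of a nonempty finite sequence of members of {u, v, w} equals 1), yet the element z₀ · z₁^{-1} belongs to this subsemigroup and has infinitely many distinct factorizations over the family (u, v, w). In particular, a finitely generated subsemigroup of a group can contain an element with infinitely many factorizations without containing the identity. -/
/-- The free group on the three generators `z₀, z₁, a`:
`z₀ = FreeGroup.of (Sum.inl 0)`, `z₁ = FreeGroup.of (Sum.inl 1)`,
`a = FreeGroup.of (Sum.inr ())`. -/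
abbrev Fuvw := FreeGroup (Fin 2 ⊕ Unit)

def z₀ : Fuvw := FreeGroup.of (Sum.inl 0)
def z₁ : Fuvw := FreeGroup.of (Sum.inl 1)
def aGen : Fuvw := FreeGroup.of (Sum.inr ())

/-- `u = z₀ · a · z₀⁻¹`. -/
def u : Fuvw := z₀ * aGen * z₀⁻¹
/-- `v = z₀ · a⁻¹ · z₁⁻¹`. -/
def v : Fuvw := z₀ * aGen⁻¹ * z₁⁻¹
/-- `w = z₁ · a⁻¹ · z₁⁻¹`. -/
def w : Fuvw := z₁ * aGen⁻¹ * z₁⁻¹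

/-- The family `(u, v, w)`, indexed by `Fin 3`. -/
def fam : Fin 3 → Fuvw := ![u, v, w]

/-! The set of elements of positive `z₀`-exponent, together with the elements of `z₀`-exponent `0`
whose image under `z₀ ↦ 1`, `a ↦ [[1,2],[0,1]]`, `z₁ ↦ [[0,-1],[1,0]]` has diagonal entries `≥ 1`
and nonnegative, not both zero, off-diagonal entries, is a subsemigroup of `F` avoiding `1`.
It contains `v` (exponent `1`) and `u`, `w` (exponent `0`, images the shears `[[1,2],[0,1]]` and
`[[1,0],[2,1]]`). On the other hand `uⁿ⁺¹ v wⁿ = z₀ aⁿ⁺¹ · a⁻¹ · a⁻ⁿ z₁⁻¹ = z₀ z₁⁻¹` for every `n`. -/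

namespace Subsemigroup

variable {G α : Type*} [Monoid G] [Monoid α] [Preorder α] [MulLeftStrictMono α]

def lexCone (χ : G →* α) (T : Subsemigroup G) : Subsemigroup G where
  carrier := {g | 1 < χ g ∨ (χ g = 1 ∧ g ∈ T)}
  mul_mem' := by
    rintro g h (hg | ⟨hg, hgT⟩) (hh | ⟨hh, hhT⟩) <;> simp only [Set.mem_ofPred_eq, map_mul]
    · exact Or.inl (Left.one_lt_mul hg hh)
    · exact Or.inl (by rwa [hh, mul_one])
    · exact Or.inl (by rwa [hg, one_mul])
    · exact Or.inr ⟨by rw [hg, hh, one_mul], T.mul_mem hgT hhT⟩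

theorem one_notMem_lexCone {χ : G →* α} {T : Subsemigroup G} (hT : (1 : G) ∉ T) :
    (1 : G) ∉ lexCone χ T := by
  rintro (h | ⟨-, h⟩)
  · exact (map_one χ ▸ h).false
  · exact hT h

end Subsemigroup

theorem List.prod_ne_one_of_forall_mem {M : Type*} [Monoid M] {S : Subsemigroup M}
    (hS : (1 : M) ∉ S) {l : List M} (hl : l ≠ []) (h : ∀ x ∈ l, x ∈ S) : l.prod ≠ 1 :=
  fun h1 => hS (h1 ▸ List.prod_induction_nonempty (· ∈ S) (fun _ _ => S.mul_mem) hl h)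

theorem conj_pow_succ_mul_mul_conj_inv_pow {G : Type*} [Group G] (x y a : G) (n : ℕ) :
    (x * a * x⁻¹) ^ (n + 1) * (x * a⁻¹ * y⁻¹) * (y * a⁻¹ * y⁻¹) ^ n = x * y⁻¹ := by
  rw [conj_pow, conj_pow, inv_pow]
  group

def intMatrixCone : Subsemigroup (Matrix (Fin 2) (Fin 2) ℤ) where
  carrier := {M | 1 ≤ M 0 0 ∧ 1 ≤ M 1 1 ∧ 0 ≤ M 0 1 ∧ 0 ≤ M 1 0 ∧ 1 ≤ M 0 1 + M 1 0}
  mul_mem' := by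
    rintro M N ⟨m₀₀, m₁₁, m₀₁, m₁₀, m⟩ ⟨n₀₀, n₁₁, n₀₁, n₁₀, n⟩
    simp only [Set.mem_ofPred_eq, Matrix.mul_apply, Fin.sum_univ_two]
    refine ⟨?_, ?_, ?_, ?_, ?_⟩ <;> nlinarith

theorem one_notMem_intMatrixCone : (1 : Matrix (Fin 2) (Fin 2) ℤ) ∉ intMatrixCone := by
  rintro ⟨-, -, -, -, h⟩
  simp at h

namespace FreeUVW

def shear : GL (Fin 2) ℤ := ⟨!![1, 2; 0, 1], !![1, -2; 0, 1], by decide, by decide⟩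

def rotation : GL (Fin 2) ℤ := ⟨!![0, 1; -1, 0], !![0, -1; 1, 0], by decide, by decide⟩

noncomputable def toGL : Fuvw →* GL (Fin 2) ℤ :=
  FreeGroup.lift (Sum.elim ![1, rotation⁻¹] fun _ => shear)

noncomputable def z₀Exponent : Fuvw →* Multiplicative ℤ :=
  FreeGroup.lift (Sum.elim ![Multiplicative.ofAdd 1, 1] fun _ => 1)

theorem toGL_u : (toGL u : Matrix (Fin 2) (Fin 2) ℤ) = !![1, 2; 0, 1] := by
  simp [toGL, u, z₀, aGen, shear]

theorem toGL_w : (toGL w : Matrix (Fin 2) (Fin 2) ℤ) = !![1, 0; 2, 1] := by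
  simp only [toGL, w, z₁, aGen, map_mul, map_inv, FreeGroup.lift_apply_of]
  decide

noncomputable def cone : Subsemigroup Fuvw :=
  Subsemigroup.lexCone z₀Exponent
    (intMatrixCone.comap ((Units.coeHom _).comp toGL).toMulHom)

theorem z₀Exponent_u : z₀Exponent u = 1 := by
  simp [z₀Exponent, u, z₀, aGen]

theorem z₀Exponent_v : z₀Exponent v = Multiplicative.ofAdd 1 := by
  simp [z₀Exponent, v, z₀, z₁, aGen]

theorem z₀Exponent_w : z₀Exponent w = 1 := by
  simp [z₀Exponent, w, z₁, aGen]

theorem fam_mem_cone (i : Fin 3) : fam i ∈ cone := by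
  fin_cases i
  · show u ∈ cone
    refine Or.inr ⟨z₀Exponent_u, ?_⟩
    simp [toGL_u, intMatrixCone]
  · exact Or.inl (show 1 < z₀Exponent v by rw [z₀Exponent_v]; decide)
  · show w ∈ cone
    refine Or.inr ⟨z₀Exponent_w, ?_⟩
    simp [toGL_w, intMatrixCone]

theorem one_notMem_cone : (1 : Fuvw) ∉ cone :=
  Subsemigroup.one_notMem_lexCone (by simpa using one_notMem_intMatrixCone)

theorem prod_ne_one {l : List (Fin 3)} (hl : l ≠ []) : (l.map fam).prod ≠ 1 :=
  List.prod_ne_one_of_forall_mem one_notMem_cone (mt List.map_eq_nil_iff.mp hl)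
    (List.forall_mem_map.mpr fun i _ => fam_mem_cone i)

def factorization (n : ℕ) : List (Fin 3) := List.replicate (n + 1) 0 ++ 1 :: List.replicate n 2

theorem factorization_ne_nil (n : ℕ) : factorization n ≠ [] := by
  simp [factorization]

theorem prod_factorization (n : ℕ) : ((factorization n).map fam).prod = z₀ * z₁⁻¹ := by
  rw [← conj_pow_succ_mul_mul_conj_inv_pow z₀ z₁ aGen n]
  simp [factorization, fam, u, v, w, List.prod_append, mul_assoc]

theorem factorization_injective : Function.Injective factorization := by
  intro m n h
  have := congrArg List.length h
  simp [factorization] at this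
  omega

end FreeUVW

open FreeUVW in
/-- The identity of `F` is not a product of a nonempty sequence of members of `{u,v,w}`,
yet `z₀ · z₁⁻¹` is such a product and has infinitely many distinct factorizations over
the family `(u, v, w)`. -/
theorem no_identity_but_infinitely_many_factorizations :
    (¬ ∃ l : List (Fin 3), l ≠ [] ∧ (l.map fam).prod = 1) ∧
      (∃ l : List (Fin 3), l ≠ [] ∧ (l.map fam).prod = z₀ * z₁⁻¹) ∧
      { l : List (Fin 3) | l ≠ [] ∧ (l.map fam).prod = z₀ * z₁⁻¹ }.Infinite :=
  ⟨fun ⟨_, hl, h⟩ => prod_ne_one hl h, ⟨_, factorization_ne_nil 0, prod_factorization 0⟩,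
    Set.infinite_of_injective_forall_mem factorization_injective
      fun n => ⟨factorization_ne_nil n, prod_factorization n⟩⟩
end

section
/- For every word w = a₁a₂⋯a_n ∈ Σ*, the number of distinct factorizations of the element # · a₁ · a₂ · ⋯ · a_n · # of F over the family W equals the number of indices i ∈ {1,…,m} such that w is accepted by the automaton A_i. In particular, # · a₁ ⋯ a_n · # is a product of a nonempty sequence of members of W if and only if w ∈ L(A₁) ∪ ⋯ ∪ L(A_m), and it has more than k factorizations over W if and only if w is accepted by more than k of the automata. -/
section DFAEncoding

variable {α : Type} [Fintype α] {m : ℕ} {Q : Fin m → Type} [∀ i, Fintype (Q i)]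

/-- The generators of the free group `F`: all states of all the automata
(the state sets are pairwise disjoint, being the summands of a sigma type),
all letters of the alphabet `Σ`, and one extra symbol `#`. -/
abbrev Gen (α : Type) (Q : Fin m → Type) : Type := (Σ i : Fin m, Q i) ⊕ α ⊕ Unit

/-- The free group `F` on the generators above. -/
abbrev Fgrp (α : Type) (Q : Fin m → Type) : Type := FreeGroup (Gen α Q)

/-- The generator corresponding to the state `q` of the `i`-th automaton. -/
def stGen (i : Fin m) (q : Q i) : Fgrp α Q := FreeGroup.of (Sum.inl ⟨i, q⟩)

/-- The generator corresponding to the letter `a ∈ Σ`. -/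
def letGen (a : α) : Fgrp α Q := FreeGroup.of (Sum.inr (Sum.inl a))

/-- The generator corresponding to the symbol `#`. -/
def hashGen : Fgrp α Q := FreeGroup.of (Sum.inr (Sum.inr ()))

/-- The index set of the family `W`: for each automaton `A_i`, one index per
transition (a state together with a letter), one index for the initial-state element
`# · q_{i,0}⁻¹`, and one index per final state. -/
abbrev Widx (α : Type) (Q : Fin m → Type) (A : ∀ i : Fin m, DFA α (Q i)) : Type :=
  (Σ i : Fin m, Q i × α) ⊕ (Fin m) ⊕ (Σ i : Fin m, {q : Q i // q ∈ (A i).accept})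

/-- The family `W`: for each `i`, the element `q · a · (δ_i(q,a))⁻¹` for each state `q`
and letter `a`, the element `# · q_{i,0}⁻¹`, and the element `q · #` for each final
state `q` of `A_i`. -/
def Wfam (A : ∀ i : Fin m, DFA α (Q i)) : Widx α Q A → Fgrp α Q
  | Sum.inl ⟨i, (q, a)⟩ => stGen i q * letGen a * (stGen i ((A i).step q a))⁻¹
  | Sum.inr (Sum.inl i) => hashGen * (stGen i (A i).start)⁻¹
  | Sum.inr (Sum.inr ⟨i, q⟩) => stGen i q.val * hashGen

/-- The element `# · a₁ · a₂ · ⋯ · a_n · #` of `F` associated with the word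
`w = a₁a₂⋯a_n ∈ Σ*`. -/
def wordElem (w : List α) : Fgrp α Q :=
  hashGen * (w.map letGen).prod * hashGen

/-! Every member of `W` is a positive word followed by at most one inverted state, so every
product of members of `W` lies in the submonoid of elements whose reduced word inverts only
states. If `x · r` equals a positive word, with `x ∈ W` and `r` such a product, then `x` must
cancel against the first one or two letters of that word; this pins down `x` and leaves a
positive word for `r`. Peeling `# · a₁ ⋯ aₙ · #` this way, a factorization must start with
`# · q_{i,0}⁻¹`, continue with the transitions of the run of `A_i` on `w`, and end with `q · #`
for the final state `q` of that run. So factorizations correspond to the automata accepting `w`. -/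
namespace FreeGroup

variable {β : Type*} [DecidableEq β]

theorem toWord_mk_singleton_mul {x : β × Bool} {g : FreeGroup β}
    (h : g.toWord.head? ≠ some (x.1, !x.2)) : (mk [x] * g).toWord = x :: g.toWord := by
  rw [toWord_mul, toWord_mk, reduce_singleton, List.singleton_append]
  refine IsReduced.reduce_eq ?_
  rcases hg : g.toWord with _ | ⟨y, t⟩
  · exact IsReduced.singleton
  · rw [hg] at h
    refine isReduced_cons_cons.2 ⟨fun h1 => ?_, hg ▸ isReduced_toWord⟩
    obtain ⟨y1, y2⟩ := y
    obtain ⟨x1, x2⟩ := x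
    simp only at h1; subst h1
    cases x2 <;> cases y2 <;> simp_all

theorem toWord_of_mul {b : β} {g : FreeGroup β} (h : g.toWord.head? ≠ some (b, false)) :
    (of b * g).toWord = (b, true) :: g.toWord :=
  toWord_mk_singleton_mul h

theorem toWord_inv_of_mul {b : β} {g : FreeGroup β} (h : g.toWord.head? ≠ some (b, true)) :
    ((of b)⁻¹ * g).toWord = (b, false) :: g.toWord :=
  toWord_mk_singleton_mul (x := (b, false)) h

theorem toWord_prod_map_of (L : List β) : (L.map of).prod.toWord = L.map (·, true) := by
  induction L with
  | nil => simp
  | cons b L ih =>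
    rw [List.map_cons, List.prod_cons, toWord_of_mul] <;> cases L <;> simp_all

def invSupportedIn (S : Set β) : Submonoid (FreeGroup β) where
  carrier := {g | ∀ b, (b, false) ∈ g.toWord → b ∈ S}
  mul_mem' {g h} hg hh b hb := by
    rcases List.mem_append.1 ((toWord_mul_sublist g h).subset hb) with hb | hb
    exacts [hg b hb, hh b hb]
  one_mem' b hb := by simp at hb

variable {S : Set β}

theorem of_mem_invSupportedIn (b : β) : of b ∈ invSupportedIn S := by
  simp [invSupportedIn]

theorem inv_of_mem_invSupportedIn {b : β} (hb : b ∈ S) : (of b)⁻¹ ∈ invSupportedIn S := by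
  simp [invSupportedIn, toWord_inv, invRev, hb]

theorem head_toWord_of_inv_of_mul_mem {c : β} {g : FreeGroup β} (hc : c ∉ S)
    (h : (of c)⁻¹ * g ∈ invSupportedIn S) : g.toWord.head? = some (c, true) := by
  by_contra hne
  exact hc (h c (by simp [toWord_inv_of_mul hne]))

theorem eq_cons_of_inv_of_mul_prod_mem {c : β} {L : List β} (hc : c ∉ S)
    (h : (of c)⁻¹ * (L.map of).prod ∈ invSupportedIn S) : ∃ L', L = c :: L' := by
  have := head_toWord_of_inv_of_mul_mem hc h
  rw [toWord_prod_map_of] at this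
  cases L <;> simp_all

theorem eq_cons_cons_of_inv_of_mul_inv_of_mul_prod_mem {c s : β} {L : List β} (hc : c ∉ S)
    (h : (of c)⁻¹ * ((of s)⁻¹ * (L.map of).prod) ∈ invSupportedIn S) :
    ∃ L', L = s :: c :: L' := by
  have hhead := head_toWord_of_inv_of_mul_mem hc h
  rcases L with _ | ⟨b, L⟩
  · simp [toWord_inv, invRev] at hhead
  by_cases hb : b = s
  · subst hb
    rw [List.map_cons, List.prod_cons, inv_mul_cancel_left] at h
    obtain ⟨L', rfl⟩ := eq_cons_of_inv_of_mul_prod_mem hc h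
    exact ⟨L', rfl⟩
  · rw [toWord_inv_of_mul (by rw [toWord_prod_map_of]; simp [hb])] at hhead
    simp at hhead

end FreeGroup

section

omit [Fintype α] [∀ i, Fintype (Q i)]

open FreeGroup

variable (A : ∀ i : Fin m, DFA α (Q i))

def markedWord (u : List α) : List (Gen α Q) :=
  u.map (Sum.inr ∘ Sum.inl) ++ [Sum.inr (Sum.inr ())]

theorem wordElem_eq_prod (w : List α) :
    (wordElem w : Fgrp α Q) = ((Sum.inr (Sum.inr ()) :: markedWord w).map of).prod := by
  simp [wordElem, markedWord, hashGen, Function.comp_def, mul_assoc]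
  rfl

theorem Wfam_mem_invSupportedIn [DecidableEq (Gen α Q)] (x : Widx α Q A) :
    Wfam A x ∈ invSupportedIn (Set.range Sum.inl) := by
  have hof (b : Gen α Q) := of_mem_invSupportedIn (S := Set.range Sum.inl) b
  have hinv (s : Σ i, Q i) :
      (of (Sum.inl s : Gen α Q))⁻¹ ∈ invSupportedIn (Set.range Sum.inl) :=
    inv_of_mem_invSupportedIn ⟨s, rfl⟩
  rcases x with ⟨i, q, a⟩ | i | ⟨i, q⟩
  exacts [mul_mem (mul_mem (hof _) (hof _)) (hinv _), mul_mem (hof _) (hinv _),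
    mul_mem (hof _) (hof _)]

theorem prod_map_Wfam_mem_invSupportedIn [DecidableEq (Gen α Q)] (l : List (Widx α Q A)) :
    (l.map (Wfam A)).prod ∈ invSupportedIn (Set.range Sum.inl) :=
  Submonoid.list_prod_mem _ fun _ hx => by
    obtain ⟨x, -, rfl⟩ := List.mem_map.1 hx
    exact Wfam_mem_invSupportedIn A x

theorem eq_cons_cons_of_transition_mul_eq {j : Fin m} {p : Q j} {a : α}
    {l : List (Widx α Q A)} {L : List (Gen α Q)}
    (h : Wfam A (Sum.inl ⟨j, p, a⟩) * (l.map (Wfam A)).prod = (L.map of).prod) :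
    ∃ L', L = Sum.inl ⟨j, p⟩ :: Sum.inr (Sum.inl a) :: L' ∧
      (l.map (Wfam A)).prod = of (Sum.inl ⟨j, (A j).step p a⟩) * (L'.map of).prod := by
  classical
  have hl := eq_inv_mul_of_mul_eq h
  simp only [Wfam, stGen, letGen] at hl
  have hmem : (of (Sum.inr (Sum.inl a)))⁻¹ *
      ((of (Sum.inl ⟨j, p⟩))⁻¹ * (L.map of).prod) ∈
        invSupportedIn (Set.range Sum.inl) := by
    convert mul_mem (inv_of_mem_invSupportedIn (Set.mem_range_self ⟨j, (A j).step p a⟩))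
      (prod_map_Wfam_mem_invSupportedIn A l) using 1
    rw [hl]; group
  obtain ⟨L', rfl⟩ := eq_cons_cons_of_inv_of_mul_inv_of_mul_prod_mem (by simp) hmem
  refine ⟨L', rfl, ?_⟩
  rw [hl, List.map_cons, List.prod_cons, List.map_cons, List.prod_cons]
  group

theorem eq_cons_of_start_mul_eq {j : Fin m} {l : List (Widx α Q A)} {L : List (Gen α Q)}
    (h : Wfam A (Sum.inr (Sum.inl j)) * (l.map (Wfam A)).prod = (L.map of).prod) :
    ∃ L', L = Sum.inr (Sum.inr ()) :: L' ∧
      (l.map (Wfam A)).prod = of (Sum.inl ⟨j, (A j).start⟩) * (L'.map of).prod := by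
  classical
  have hl := eq_inv_mul_of_mul_eq h
  simp only [Wfam, stGen, hashGen] at hl
  have hmem : (of (Sum.inr (Sum.inr ())))⁻¹ * (L.map of).prod ∈
      invSupportedIn (Set.range Sum.inl) := by
    convert mul_mem (inv_of_mem_invSupportedIn (Set.mem_range_self ⟨j, (A j).start⟩))
      (prod_map_Wfam_mem_invSupportedIn A l) using 1
    rw [hl]; group
  obtain ⟨L', rfl⟩ := eq_cons_of_inv_of_mul_prod_mem (by simp) hmem
  refine ⟨L', rfl, ?_⟩
  rw [hl, List.map_cons, List.prod_cons]
  group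

theorem eq_cons_cons_of_accept_mul_eq {j : Fin m} {p : {q : Q j // q ∈ (A j).accept}}
    {l : List (Widx α Q A)} {L : List (Gen α Q)}
    (h : Wfam A (Sum.inr (Sum.inr ⟨j, p⟩)) * (l.map (Wfam A)).prod = (L.map of).prod) :
    ∃ L', L = Sum.inl ⟨j, p⟩ :: Sum.inr (Sum.inr ()) :: L' ∧
      (l.map (Wfam A)).prod = (L'.map of).prod := by
  classical
  have hl := eq_inv_mul_of_mul_eq h
  simp only [Wfam, stGen, hashGen] at hl
  have hmem : (of (Sum.inr (Sum.inr ())))⁻¹ *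
      ((of (Sum.inl ⟨j, p.1⟩))⁻¹ * (L.map of).prod) ∈
        invSupportedIn (Set.range Sum.inl) := by
    convert prod_map_Wfam_mem_invSupportedIn A l using 1
    rw [hl]; group
  obtain ⟨L', rfl⟩ := eq_cons_cons_of_inv_of_mul_inv_of_mul_prod_mem (by simp) hmem
  refine ⟨L', rfl, ?_⟩
  rw [hl, List.map_cons, List.prod_cons, List.map_cons, List.prod_cons]
  group

def runFactorization (i : Fin m) : (q : Q i) → (u : List α) →
    (A i).evalFrom q u ∈ (A i).accept → List (Widx α Q A)
  | q, [], h => [Sum.inr (Sum.inr ⟨i, q, h⟩)]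
  | q, a :: u, h => Sum.inl ⟨i, q, a⟩ :: runFactorization i ((A i).step q a) u h

theorem prod_runFactorization (i : Fin m) (q : Q i) (u : List α)
    (h : (A i).evalFrom q u ∈ (A i).accept) :
    ((runFactorization A i q u h).map (Wfam A)).prod =
      ((Sum.inl ⟨i, q⟩ :: markedWord u).map of).prod := by
  induction u generalizing q with
  | nil => simp [runFactorization, Wfam, stGen, hashGen, markedWord]
  | cons a u ih =>
    rw [runFactorization, List.map_cons, List.prod_cons, ih ((A i).step q a) h]
    simp [Wfam, stGen, letGen, markedWord, mul_assoc]

theorem eq_nil_of_prod_eq_one {l : List (Widx α Q A)} (h : (l.map (Wfam A)).prod = 1) :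
    l = [] := by
  rcases l with _ | ⟨x, l⟩
  · rfl
  replace h : Wfam A x * (l.map (Wfam A)).prod = (([] : List (Gen α Q)).map of).prod := h
  rcases x with ⟨j, p, a⟩ | j | ⟨j, p⟩
  · obtain ⟨_, h, -⟩ := eq_cons_cons_of_transition_mul_eq A h; cases h
  · obtain ⟨_, h, -⟩ := eq_cons_of_start_mul_eq A h; cases h
  · obtain ⟨_, h, -⟩ := eq_cons_cons_of_accept_mul_eq A h; cases h

theorem eq_runFactorization_of_prod_eq {i : Fin m} (l : List (Widx α Q A)) (q : Q i)
    (u : List α) (h : (l.map (Wfam A)).prod = ((Sum.inl ⟨i, q⟩ :: markedWord u).map of).prod) :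
    ∃ hu, l = runFactorization A i q u hu := by
  induction l generalizing q u with
  | nil =>
    classical
    have := congrArg toWord h
    rw [List.map_nil, List.prod_nil, toWord_one, toWord_prod_map_of] at this
    cases this
  | cons x l ih =>
    rw [List.map_cons, List.prod_cons] at h
    rcases x with ⟨j, p, a⟩ | j | ⟨j, p⟩
    · obtain ⟨L', hL, hl⟩ := eq_cons_cons_of_transition_mul_eq A h
      obtain ⟨⟨rfl, ⟨⟩⟩, hu⟩ := by
        simpa only [List.cons.injEq, Sum.inl.injEq, Sigma.mk.inj_iff] using hL
      rcases u with _ | ⟨b, u⟩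
      · cases hu
      obtain ⟨rfl, rfl⟩ : b = a ∧ markedWord u = L' := by simpa [markedWord] using hu
      obtain ⟨hu, rfl⟩ := ih _ _ (by rw [hl]; rfl)
      exact ⟨hu, rfl⟩
    · obtain ⟨L', hL, -⟩ := eq_cons_of_start_mul_eq A h
      cases hL
    · obtain ⟨L', hL, hl⟩ := eq_cons_cons_of_accept_mul_eq A h
      obtain ⟨⟨rfl, ⟨⟩⟩, hu⟩ := by
        simpa only [List.cons.injEq, Sum.inl.injEq, Sigma.mk.inj_iff] using hL
      rcases u with _ | ⟨b, u⟩
      · obtain rfl : L' = [] := by simpa [markedWord] using hu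
        obtain rfl := eq_nil_of_prod_eq_one A hl
        exact ⟨p.2, rfl⟩
      · simp [markedWord] at hu

theorem ne_nil_and_prod_eq_wordElem_iff (w : List α) (l : List (Widx α Q A)) :
    (l ≠ [] ∧ (l.map (Wfam A)).prod = wordElem w) ↔
      ∃ i, ∃ h : w ∈ (A i).accepts,
        l = Sum.inr (Sum.inl i) :: runFactorization A i (A i).start w h := by
  constructor
  · rintro ⟨hne, h⟩
    obtain ⟨x, l, rfl⟩ := List.exists_cons_of_ne_nil hne
    rw [wordElem_eq_prod, List.map_cons, List.prod_cons] at h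
    rcases x with ⟨j, p, a⟩ | j | ⟨j, p⟩
    · obtain ⟨L', hL, -⟩ := eq_cons_cons_of_transition_mul_eq A h
      cases hL
    · obtain ⟨L', ⟨⟩, hl⟩ := eq_cons_of_start_mul_eq A h
      obtain ⟨hw, rfl⟩ := eq_runFactorization_of_prod_eq A l (A j).start w hl
      exact ⟨j, hw, rfl⟩
    · obtain ⟨L', hL, -⟩ := eq_cons_cons_of_accept_mul_eq A h
      cases hL
  · rintro ⟨i, h, rfl⟩
    refine ⟨List.cons_ne_nil _ _, ?_⟩
    rw [List.map_cons, List.prod_cons, prod_runFactorization A i _ w h, wordElem_eq_prod]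
    simp [Wfam, stGen, hashGen]

end

/-- For every word `w ∈ Σ*`, the number of distinct factorizations of
`# · a₁ ⋯ a_n · #` over the family `W` equals the number of automata accepting `w`;
in particular `# · a₁ ⋯ a_n · #` is a nonempty product of members of `W` iff some
automaton accepts `w`, and it has more than `k` factorizations iff more than `k` of
the automata accept `w`. -/
theorem factorizations_count_eq_accepting_count
    (A : ∀ i : Fin m, DFA α (Q i)) (w : List α) :
    { l : List (Widx α Q A) | l ≠ [] ∧ (l.map (Wfam A)).prod = wordElem w }.ncard =
        { i : Fin m | w ∈ (A i).accepts }.ncard ∧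
      ((∃ l : List (Widx α Q A), l ≠ [] ∧ (l.map (Wfam A)).prod = wordElem w) ↔
        ∃ i : Fin m, w ∈ (A i).accepts) ∧
      (∀ k : ℕ,
        k < { l : List (Widx α Q A) | l ≠ [] ∧
                (l.map (Wfam A)).prod = wordElem w }.ncard ↔
          k < { i : Fin m | w ∈ (A i).accepts }.ncard) := by
  have hcard : { l : List (Widx α Q A) | l ≠ [] ∧ (l.map (Wfam A)).prod = wordElem w }.ncard =
      { i : Fin m | w ∈ (A i).accepts }.ncard := by
    refine (Set.ncard_congr (fun i h => Sum.inr (Sum.inl i) :: runFactorization A i _ w h)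
      (fun i h => (ne_nil_and_prod_eq_wordElem_iff A w _).2 ⟨i, h, rfl⟩) (fun i j _ _ hij => ?_)
      (fun l hl => ?_)).symm
    · exact (List.cons.inj hij).1 |> Sum.inr_injective |> Sum.inl_injective
    · obtain ⟨i, h, rfl⟩ := (ne_nil_and_prod_eq_wordElem_iff A w l).1 hl
      exact ⟨i, h, rfl⟩
  refine ⟨hcard, ⟨fun ⟨l, hl⟩ => ?_, fun ⟨i, h⟩ => ?_⟩, fun k => by rw [hcard]⟩
  · obtain ⟨i, h, -⟩ := (ne_nil_and_prod_eq_wordElem_iff A w l).1 hl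
    exact ⟨i, h⟩
  · exact ⟨_, (ne_nil_and_prod_eq_wordElem_iff A w _).2 ⟨i, h, rfl⟩⟩

end DFAEncoding
end
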